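/- There exist ε > 0 and C > 0 such that for every Δt ∈ [0, ε), with β(Δt) the unique solution in (0, σ_K/σ_S] of the monopoly quartic equation, λ(Δt) := β(Δt)σ_S²/(σ_K² + β(Δt)²σ_S²), φ(Δt) := 1 − λ(Δt)β(Δt)/(1 − λ(Δt)β(Δt)), and μ(Δt) := λ(Δt)φ(Δt), one has |φ(Δt) − (2γσ_K/σ_S)^{1/2}·√Δt| ≤ C·Δt and |μ(Δt) − (γσ_S/(2σ_K))^{1/2}·√Δt| ≤ C·Δt. -/

import Mathlib

/-!
With `k = σ_K/σ_S` and `s = β/k ∈ (0, 1]`, the quartic reads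
`(1 - s²)² + ρΔt s²(1 - s²) = γkΔt s(1 + s²)`, while `φ = 1 - s²` and
`2kμ = 2s/(1 + s²) · φ`. The right side is `2γkΔt` up to `O(Δt φ)`, so
`φ² = 2γkΔt + O(Δt φ)` and `φ = √(2γkΔt) + O(Δt)`.
Moreover `0 ≤ 1 - 2s/(1 + s²) ≤ φ² = O(Δt)`, so `2kμ = φ + O(Δt)` as well.
For `ρΔt ≤ 1` the reduced quartic decreases strictly on `[0, 1]`, from `1` to `-2γkΔt`,
which gives the unique root.
-/

open Real Set

noncomputable def reducedQuartic (r a s : ℝ) : ℝ :=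
  (1 - s ^ 2) ^ 2 + r * s ^ 2 * (1 - s ^ 2) - a * s * (s ^ 2 + 1)

noncomputable def monopolyQuartic (k γ ρ Δt b : ℝ) : ℝ :=
  (1 - ρ * Δt) * b ^ 4 - (2 - ρ * Δt + b * γ * Δt) * k ^ 2 * b ^ 2
    + k ^ 4 * (1 - b * γ * Δt)

noncomputable def monopolyLam (σS σK β : ℝ) : ℝ :=
  β * σS ^ 2 / (σK ^ 2 + β ^ 2 * σS ^ 2)

noncomputable def monopolyPhi (σS σK β : ℝ) : ℝ :=
  1 - monopolyLam σS σK β * β / (1 - monopolyLam σS σK β * β)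

theorem monopolyQuartic_mul (k γ ρ Δt s : ℝ) :
    monopolyQuartic k γ ρ Δt (k * s) = k ^ 4 * reducedQuartic (ρ * Δt) (γ * k * Δt) s := by
  unfold monopolyQuartic reducedQuartic
  ring

theorem mul_mem_Ioc_zero_iff {k s : ℝ} (hk : 0 < k) : k * s ∈ Ioc 0 k ↔ s ∈ Ioc 0 1 := by
  simp only [mem_Ioc, mul_pos_iff_of_pos_left hk, mul_le_iff_le_one_right hk]

theorem monopolyQuartic_mul_eq_zero_iff {k γ ρ Δt : ℝ} (hk : k ≠ 0) (s : ℝ) :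
    monopolyQuartic k γ ρ Δt (k * s) = 0 ↔ reducedQuartic (ρ * Δt) (γ * k * Δt) s = 0 := by
  rw [monopolyQuartic_mul, mul_eq_zero, or_iff_right (pow_ne_zero 4 hk)]

section ReducedQuartic

variable {r a s : ℝ}

theorem strictAntiOn_reducedQuartic (hr₀ : 0 ≤ r) (hr₁ : r ≤ 1) (ha : 0 ≤ a) :
    StrictAntiOn (reducedQuartic r a) (Icc 0 1) := by
  rintro x ⟨hx₀, -⟩ y ⟨-, hy₁⟩ hxy
  -- with `u = 1 - s²`, the first two terms are `(1 - r) u² + r u`, increasing in `u ≥ 0`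
  have key : reducedQuartic r a x - reducedQuartic r a y =
      (y ^ 2 - x ^ 2) * ((1 - r) * ((1 - x ^ 2) + (1 - y ^ 2)) + r)
        + a * ((y - x) * (y ^ 2 + x * y + x ^ 2 + 1)) := by
    unfold reducedQuartic
    ring
  have hsq : 0 < y ^ 2 - x ^ 2 := by nlinarith
  have hfactor : 0 < (1 - r) * ((1 - x ^ 2) + (1 - y ^ 2)) + r := by
    nlinarith [mul_nonneg (sub_nonneg.2 hr₁) (by nlinarith : (0 : ℝ) ≤ 1 - y ^ 2),
      mul_nonneg hr₀ (sq_nonneg x)]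
  have hcubic : 0 ≤ a * ((y - x) * (y ^ 2 + x * y + x ^ 2 + 1)) :=
    mul_nonneg ha (mul_nonneg (by linarith) (by nlinarith))
  linarith [mul_pos hsq hfactor]

theorem existsUnique_reducedQuartic_eq_zero (hr₀ : 0 ≤ r) (hr₁ : r ≤ 1) (ha : 0 ≤ a) :
    ∃! s, s ∈ Ioc 0 1 ∧ reducedQuartic r a s = 0 := by
  have hcont : ContinuousOn (reducedQuartic r a) (Icc 0 1) := by
    unfold reducedQuartic
    fun_prop
  have hsign : (0 : ℝ) ∈ Icc (reducedQuartic r a 1) (reducedQuartic r a 0) := by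
    unfold reducedQuartic
    constructor <;> norm_num [ha]
  obtain ⟨s, hs, hroot⟩ := intermediate_value_Icc' zero_le_one hcont hsign
  have hs₀ : s ≠ 0 := by
    rintro rfl
    norm_num [reducedQuartic] at hroot
  refine ⟨s, ⟨⟨lt_of_le_of_ne hs.1 (Ne.symm hs₀), hs.2⟩, hroot⟩,
    fun t ⟨ht, htroot⟩ => ?_⟩
  exact (strictAntiOn_reducedQuartic hr₀ hr₁ ha).injOn (Ioc_subset_Icc_self ht) hs
    (htroot.trans hroot.symm)

theorem sq_one_sub_sq_le_of_reducedQuartic_eq_zero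
    (hs : s ∈ Icc 0 1) (hr : 0 ≤ r) (ha : 0 ≤ a) (hroot : reducedQuartic r a s = 0) :
    (1 - s ^ 2) ^ 2 ≤ 2 * a := by
  obtain ⟨hs₀, hs₁⟩ := hs
  have hφ : 0 ≤ 1 - s ^ 2 := by nlinarith
  have hcubic : s * (s ^ 2 + 1) ≤ 2 := by nlinarith
  unfold reducedQuartic at hroot
  nlinarith [mul_nonneg (mul_nonneg hr (sq_nonneg s)) hφ, mul_le_mul_of_nonneg_left hcubic ha]

theorem abs_one_sub_sq_sub_sqrt_le_of_reducedQuartic_eq_zero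
    (hs : s ∈ Icc 0 1) (hr : 0 ≤ r) (ha : 0 ≤ a) (hroot : reducedQuartic r a s = 0) :
    |1 - s ^ 2 - √(2 * a)| ≤ r + 3 * a := by
  have hsq := sq_one_sub_sq_le_of_reducedQuartic_eq_zero hs hr ha hroot
  obtain ⟨hs₀, hs₁⟩ := hs
  set φ := 1 - s ^ 2
  set t := √(2 * a)
  have hφ : 0 ≤ φ := by nlinarith
  have ht : 0 ≤ t := sqrt_nonneg _
  have ht_sq : t ^ 2 = 2 * a := sq_sqrt (by positivity)
  have hupper : φ ≤ t := le_sqrt_of_sq_le hsq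
  -- `2 - s(s² + 1) ≤ 3(1 - s²)` on `[0, 1]`, so `t² ≤ φ (φ + r + 3a)`
  have hquad : t ^ 2 ≤ φ * (φ + r + 3 * a) := by
    have hdefect : 0 ≤ a * ((1 - s) * (1 + 2 * s - s ^ 2)) :=
      mul_nonneg ha (mul_nonneg (by linarith) (by nlinarith))
    unfold reducedQuartic at hroot
    nlinarith [mul_nonneg (mul_nonneg hr hφ) hφ]
  have hlower : t ≤ φ + r + 3 * a := by
    by_contra! h
    nlinarith [mul_le_mul_of_nonneg_right hupper (by positivity : 0 ≤ φ + r + 3 * a)]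
  rw [abs_le]
  constructor <;> linarith

theorem abs_two_mul_div_mul_one_sub_sq_sub_sqrt_le_of_reducedQuartic_eq_zero
    (hs : s ∈ Icc 0 1) (hr : 0 ≤ r) (ha : 0 ≤ a) (hroot : reducedQuartic r a s = 0) :
    |2 * s / (1 + s ^ 2) * (1 - s ^ 2) - √(2 * a)| ≤ r + 5 * a := by
  have hφt := abs_one_sub_sq_sub_sqrt_le_of_reducedQuartic_eq_zero hs hr ha hroot
  have hsq := sq_one_sub_sq_le_of_reducedQuartic_eq_zero hs hr ha hroot
  obtain ⟨hs₀, hs₁⟩ := hs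
  set φ := 1 - s ^ 2
  set ℓ := 2 * s / (1 + s ^ 2) with hℓ_def
  have hφ₀ : 0 ≤ φ := by nlinarith
  have hφ₁ : φ ≤ 1 := by nlinarith
  have hpos : (0 : ℝ) < 1 + s ^ 2 := by positivity
  have hℓ₁ : 0 ≤ 1 - ℓ := by
    rw [sub_nonneg, hℓ_def, div_le_one hpos]
    nlinarith [sq_nonneg (1 - s)]
  -- `1 - ℓ = (1 - s)² / (1 + s²) ≤ (1 - s)² (1 + s)² = φ²`
  have hℓφ : 1 - ℓ ≤ φ ^ 2 := by
    have h : 1 - ℓ = (1 - s) ^ 2 / (1 + s ^ 2) := by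
      rw [hℓ_def]
      field_simp
      ring
    rw [h, div_le_iff₀ hpos]
    nlinarith [mul_nonneg (sq_nonneg (1 - s))
      (by positivity : 0 ≤ s * (2 + 3 * s + 2 * s ^ 2 + s ^ 3))]
  have hdefect : |(1 - ℓ) * φ| ≤ 2 * a := by
    rw [abs_of_nonneg (mul_nonneg hℓ₁ hφ₀)]
    calc (1 - ℓ) * φ ≤ φ ^ 2 * 1 := mul_le_mul hℓφ hφ₁ hφ₀ (sq_nonneg φ)
      _ ≤ 2 * a := by rw [mul_one]; exact hsq
  calc |ℓ * φ - √(2 * a)| = |(φ - √(2 * a)) - (1 - ℓ) * φ| := by ring_nf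
    _ ≤ |φ - √(2 * a)| + |(1 - ℓ) * φ| := abs_sub _ _
    _ ≤ r + 3 * a + 2 * a := add_le_add hφt hdefect
    _ = r + 5 * a := by ring

end ReducedQuartic

theorem existsUnique_monopolyQuartic_eq_zero {k γ ρ Δt : ℝ} (hk : 0 < k) (hγ : 0 ≤ γ)
    (hρ : 0 ≤ ρ) (hΔt : 0 ≤ Δt) (hρΔt : ρ * Δt ≤ 1) :
    ∃! β, β ∈ Ioc 0 k ∧ monopolyQuartic k γ ρ Δt β = 0 := by
  obtain ⟨s, ⟨hs, hroot⟩, huniq⟩ := existsUnique_reducedQuartic_eq_zero (a := γ * k * Δt)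
    (by positivity) hρΔt (by positivity)
  refine ⟨k * s,
    ⟨(mul_mem_Ioc_zero_iff hk).2 hs, (monopolyQuartic_mul_eq_zero_iff hk.ne' s).2 hroot⟩,
    fun β ⟨hβ, hβroot⟩ => ?_⟩
  obtain ⟨t, rfl⟩ : ∃ t, β = k * t := ⟨β / k, by field_simp⟩
  rw [huniq t
    ⟨(mul_mem_Ioc_zero_iff hk).1 hβ, (monopolyQuartic_mul_eq_zero_iff hk.ne' t).1 hβroot⟩]

section Scaling

variable {σS σK k : ℝ}

theorem monopolyLam_mul (hσS : σS ≠ 0) (hk : k ≠ 0) (hσK : σK = k * σS) (s : ℝ) :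
    monopolyLam σS σK (k * s) = 2 * s / (1 + s ^ 2) / (2 * k) := by
  subst hσK
  unfold monopolyLam
  field_simp

theorem monopolyPhi_mul (hσS : σS ≠ 0) (hk : k ≠ 0) (hσK : σK = k * σS) (s : ℝ) :
    monopolyPhi σS σK (k * s) = 1 - s ^ 2 := by
  unfold monopolyPhi
  rw [monopolyLam_mul hσS hk hσK]
  field_simp
  ring

theorem sqrt_mul_sqrt_eq_sqrt_of_eq_mul {γ Δt : ℝ} (hσS : σS ≠ 0) (hσK : σK = k * σS)
    (hΔt : 0 ≤ Δt) : √(2 * γ * σK / σS) * √Δt = √(2 * (γ * k * Δt)) := by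
  subst hσK
  rw [← sqrt_mul' _ hΔt]
  congr 1
  field_simp

theorem sqrt_mul_sqrt_eq_sqrt_div_of_eq_mul {γ Δt : ℝ} (hσS : 0 < σS) (hk : 0 < k)
    (hσK : σK = k * σS) (hγ : 0 ≤ γ) (hΔt : 0 ≤ Δt) :
    √(γ * σS / (2 * σK)) * √Δt = √(2 * (γ * k * Δt)) / (2 * k) := by
  subst hσK
  rw [← sqrt_mul (by positivity), eq_div_iff (by positivity),
    ← sqrt_sq (by positivity : 0 ≤ 2 * k), ← sqrt_mul (by positivity)]
  congr 1
  field_simp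

end Scaling

/-- with `β(Δt)` the unique solution of the monopoly quartic,
`λ = βσ_S²/(σ_K²+β²σ_S²)`, `φ = 1 − λβ/(1−λβ)`, and `μ = λφ`, one has
`φ = (2γσ_K/σ_S)^{1/2}√Δt + O(Δt)` and `μ = (γσ_S/(2σ_K))^{1/2}√Δt + O(Δt)`. -/
theorem stmt3 (σS σK γ ρ : ℝ) (hσS : 0 < σS) (hσK : 0 < σK) (hγ : 0 < γ) (hρ : 0 < ρ) :
    ∃ ε > 0, ∃ C > 0, ∀ Δt : ℝ, 0 ≤ Δt → Δt < ε →
      ∃ β lam φ μ : ℝ,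
        (β ∈ Set.Ioc 0 (σK / σS) ∧
          0 = (1 - ρ * Δt) * β ^ 4
                - (2 - ρ * Δt + β * γ * Δt) * (σK / σS) ^ 2 * β ^ 2
                + (σK / σS) ^ 4 * (1 - β * γ * Δt)) ∧
        (∀ b : ℝ, b ∈ Set.Ioc 0 (σK / σS) →
          0 = (1 - ρ * Δt) * b ^ 4
                - (2 - ρ * Δt + b * γ * Δt) * (σK / σS) ^ 2 * b ^ 2
                + (σK / σS) ^ 4 * (1 - b * γ * Δt) → b = β) ∧
        lam = β * σS ^ 2 / (σK ^ 2 + β ^ 2 * σS ^ 2) ∧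
        φ = 1 - lam * β / (1 - lam * β) ∧
        μ = lam * φ ∧
        |φ - Real.sqrt (2 * γ * σK / σS) * Real.sqrt Δt| ≤ C * Δt ∧
        |μ - Real.sqrt (γ * σS / (2 * σK)) * Real.sqrt Δt| ≤ C * Δt := by
  set k := σK / σS
  have hk : 0 < k := div_pos hσK hσS
  refine ⟨1 / ρ, by positivity, ρ + 3 * γ * k + (ρ + 5 * γ * k) / (2 * k), by positivity,
    fun Δt hΔt hΔtε => ?_⟩
  have hρΔt : ρ * Δt ≤ 1 := by
    rw [lt_div_iff₀ hρ] at hΔtε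
    linarith
  obtain ⟨β, ⟨hβ, hroot⟩, huniq⟩ :=
    existsUnique_monopolyQuartic_eq_zero hk hγ.le hρ.le hΔt hρΔt
  refine ⟨β, monopolyLam σS σK β, monopolyPhi σS σK β, _, ⟨hβ, hroot.symm⟩,
    fun b hb hb_root => huniq b ⟨hb, hb_root.symm⟩, rfl, rfl, rfl, ?_⟩
  obtain ⟨s, rfl⟩ : ∃ s, β = k * s := ⟨β / k, by field_simp⟩
  have hs : s ∈ Icc 0 1 := Ioc_subset_Icc_self ((mul_mem_Ioc_zero_iff hk).1 hβ)
  have hs_root := (monopolyQuartic_mul_eq_zero_iff hk.ne' s).1 hroot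
  have hσK' : σK = k * σS := (div_mul_cancel₀ σK hσS.ne').symm
  rw [monopolyLam_mul hσS.ne' hk.ne' hσK', monopolyPhi_mul hσS.ne' hk.ne' hσK',
    sqrt_mul_sqrt_eq_sqrt_of_eq_mul hσS.ne' hσK' hΔt,
    sqrt_mul_sqrt_eq_sqrt_div_of_eq_mul hσS hk hσK' hγ.le hΔt]
  have hC₁ : 0 ≤ (ρ + 3 * γ * k) * Δt := by positivity
  have hC₂ : 0 ≤ (ρ + 5 * γ * k) / (2 * k) * Δt := by positivity
  constructor
  · exact (abs_one_sub_sq_sub_sqrt_le_of_reducedQuartic_eq_zero hs (by positivity)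
      (by positivity) hs_root).trans (by linarith)
  · calc _ = |2 * s / (1 + s ^ 2) * (1 - s ^ 2) - √(2 * (γ * k * Δt))| / (2 * k) := by
          rw [div_mul_eq_mul_div, ← sub_div, abs_div, abs_of_pos (by positivity : 0 < 2 * k)]
      _ ≤ (ρ * Δt + 5 * (γ * k * Δt)) / (2 * k) := by
          gcongr
          exact abs_two_mul_div_mul_one_sub_sq_sub_sqrt_le_of_reducedQuartic_eq_zero hs
            (by positivity) (by positivity) hs_root
      _ = (ρ + 5 * γ * k) / (2 * k) * Δt := by ring
      _ ≤ _ := by linarith
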